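/- arXiv:1710.02293 — 2 statements merged into one kernel-verified Lean document; each statement's English description precedes it below -/
import Mathlib

section
/- For a bounded self-adjoint operator H with a simple eigenvalue E and normalized eigenfunction φ, and any vectors u, v, we have |⟨u, φ⟩⟨φ, v⟩| ≤ sup_{t∈ℝ} |⟨u, e^{-itH} v⟩|. -/
/-!
Put `A = E - H` and `T = exp (i s A)` with `s > 0` so small that `‖s A‖ < 2π`. Then
`exp (i s A) - 1 = g (i s A) * (i s A)` with `g z = (e^z - 1) / z` invertible on the spectrum, so
the fixed vectors of `T` are exactly `ker A = ℂ φ`, and by von Neumann's mean ergodic theorem the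
Cesàro means of `T^k v` converge to `⟪φ, v⟫ φ`. Up to the phase `e^{iksE}`, `T^k` is the evolution
`e^{-iksH}`, so `|⟪u, T^k v⟫| ≤ sup_t |⟪u, e^{-itH} v⟫|`, a bound that survives convex combinations
and limits.
-/

open scoped InnerProductSpace
open Complex (I)

lemma Complex.eq_zero_of_exp_eq_one_of_norm_lt {z : ℂ} (hz : Complex.exp z = 1)
    (hnorm : ‖z‖ < 2 * Real.pi) : z = 0 := by
  obtain ⟨n, rfl⟩ := exp_eq_one_iff.mp hz
  have hn : |(n : ℝ)| < 1 := by
    rw [norm_mul, norm_intCast] at hnorm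
    simpa [Real.pi_pos, abs_of_pos] using hnorm
  have : n = 0 := by
    rw [← Int.cast_abs] at hn
    exact Int.abs_lt_one_iff.mp (by exact_mod_cast hn)
  simp [this]

lemma Complex.continuous_dslope_exp : Continuous (dslope Complex.exp 0) :=
  continuousOn_univ.mp <| (continuousOn_dslope Filter.univ_mem).mpr
    ⟨Complex.continuous_exp.continuousOn, Complex.differentiableAt_exp⟩

lemma Complex.dslope_exp_ne_zero {z : ℂ} (hz : ‖z‖ < 2 * Real.pi) : dslope Complex.exp 0 z ≠ 0 := by
  rcases eq_or_ne z 0 with rfl | hz0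
  · simp [dslope_same]
  · intro h
    have := sub_smul_dslope Complex.exp 0 z
    rw [h, smul_zero, Complex.exp_zero, eq_comm, sub_eq_zero] at this
    exact hz0 (eq_zero_of_exp_eq_one_of_norm_lt this hz)

section CStarAlgebra

variable {A : Type*} [CStarAlgebra A]

lemma exp_sub_one_eq_cfc_dslope_exp_mul (a : A) [IsStarNormal a] :
    NormedSpace.exp a - 1 = cfc (dslope Complex.exp 0) a * a := by
  have hmul : cfc (fun z => dslope Complex.exp 0 z * z) a = cfc (dslope Complex.exp 0) a * a := by
    rw [cfc_mul _ _ a Complex.continuous_dslope_exp.continuousOn, cfc_id' ℂ a]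
  rw [← hmul, ← CFC.complex_exp_eq_normedSpace_exp (p := IsStarNormal), ← cfc_one ℂ a,
    ← cfc_sub _ _ a]
  refine cfc_congr fun z _ => ?_
  simpa [mul_comm] using (sub_smul_dslope Complex.exp 0 z).symm

lemma isUnit_cfc_dslope_exp {a : A} [IsStarNormal a] (ha : ‖a‖ < 2 * Real.pi) :
    IsUnit (cfc (dslope Complex.exp 0) a) := by
  nontriviality A
  exact (isUnit_cfc_iff _ a Complex.continuous_dslope_exp.continuousOn).mpr fun _ hz =>
    Complex.dslope_exp_ne_zero ((spectrum.norm_le_norm_of_mem hz).trans_lt ha)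

end CStarAlgebra

lemma IsSelfAdjoint.ofReal_mul_I_smul_mem_skewAdjoint {A : Type*} [AddCommGroup A] [StarAddMonoid A]
    [Module ℂ A] [StarModule ℂ A] {a : A} (ha : IsSelfAdjoint a) (r : ℝ) :
    ((r : ℂ) * I) • a ∈ skewAdjoint A :=
  IsSelfAdjoint.smul_mem_skewAdjoint (by simp [skewAdjoint.mem_iff]) ha

lemma IsSelfAdjoint.exp_ofReal_mul_I_smul_mem_unitary {A : Type*} [NormedRing A]
    [NormedAlgebra ℂ A] [StarRing A] [ContinuousStar A] [CompleteSpace A] [StarModule ℂ A]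
    {a : A} (ha : IsSelfAdjoint a) (r : ℝ) : NormedSpace.exp (((r : ℂ) * I) • a) ∈ unitary A :=
  let _ : NormedAlgebra ℚ A := NormedAlgebra.restrictScalars ℚ ℂ A
  NormedSpace.exp_mem_unitary_of_mem_skewAdjoint (ha.ofReal_mul_I_smul_mem_skewAdjoint r)

lemma exp_smul_smul_one_sub_pow {A : Type*} [NormedRing A] [NormedAlgebra ℂ A] [CompleteSpace A]
    (z w : ℂ) (a : A) (k : ℕ) :
    NormedSpace.exp (z • (w • 1 - a)) ^ k =
      Complex.exp (k * z * w) • NormedSpace.exp ((-(k * z)) • a) := by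
  let _ : NormedAlgebra ℚ A := NormedAlgebra.restrictScalars ℚ ℂ A
  have hsplit : (k : ℂ) • z • (w • (1 : A) - a) = algebraMap ℂ A (k * z * w) + (-(k * z)) • a := by
    rw [Algebra.algebraMap_eq_smul_one]; module
  rw [← NormedSpace.exp_nsmul, ← Nat.cast_smul_eq_nsmul ℂ, hsplit,
    NormedSpace.exp_add_of_commute (Algebra.commutes _ _), ← NormedSpace.algebraMap_exp_comm,
    Complex.exp_eq_exp_ℂ, Algebra.algebraMap_eq_smul_one, smul_one_mul]

theorem birkhoffAverage_mem_of_convex {R M α : Type*} [Field R] [LinearOrder R]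
    [IsStrictOrderedRing R] [AddCommGroup M] [Module R M] {s : Set M} (hs : Convex R s)
    {f : α → α} {g : α → M} {x : α} (hg : ∀ k, g (f^[k] x) ∈ s) {n : ℕ} (hn : n ≠ 0) :
    birkhoffAverage R f g n x ∈ s := by
  rw [birkhoffAverage, birkhoffSum, Finset.smul_sum]
  refine hs.sum_mem (fun _ _ => by positivity) ?_ fun k _ => hg k
  simp [hn]

theorem ContinuousLinearMap.starProjection_eqLocus_one_mem {𝕜 E : Type*} [RCLike 𝕜]
    [NormedAddCommGroup E] [InnerProductSpace 𝕜 E] [CompleteSpace E] [Module ℝ E]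
    (T : E →L[𝕜] E) (hT : ‖T‖ ≤ 1) {s : Set E} (hs : Convex ℝ s) (hsc : IsClosed s) {x : E}
    (hx : ∀ k : ℕ, (T ^ k) x ∈ s) : (T.eqLocus (1 : E →L[𝕜] E)).starProjection x ∈ s := by
  refine hsc.mem_of_tendsto (T.tendsto_birkhoffAverage_orthogonalProjection hT x) ?_
  filter_upwards [Filter.eventually_ne_atTop 0] with n hn
  rw [birkhoffAverage_congr_ring 𝕜 ℝ]
  refine birkhoffAverage_mem_of_convex hs (fun k => ?_) hn
  rw [← FunLike.coe_pow_eq_iterate]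
  exact hx k

section Hilbert

variable {V : Type*} [NormedAddCommGroup V] [InnerProductSpace ℂ V] [CompleteSpace V]

theorem ContinuousLinearMap.norm_inner_starProjection_eqLocus_one_le (T : V →L[ℂ] V)
    (hT : ‖T‖ ≤ 1) {u x : V} {M : ℝ} (h : ∀ k : ℕ, ‖⟪u, (T ^ k) x⟫_ℂ‖ ≤ M) :
    ‖⟪u, (T.eqLocus (1 : V →L[ℂ] V)).starProjection x⟫_ℂ‖ ≤ M := by
  refine T.starProjection_eqLocus_one_mem hT (s := {w | ‖⟪u, w⟫_ℂ‖ ≤ M}) ?_ ?_ h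
  · simpa [Set.preimage, mem_closedBall_zero_iff] using
      (convex_closedBall (0 : ℂ) M).linear_preimage ((innerₛₗ ℂ u).restrictScalars ℝ)
  · exact isClosed_le (by fun_prop) continuous_const

lemma ContinuousLinearMap.exp_apply_eq_self_iff {X : V →L[ℂ] V} [IsStarNormal X]
    (hX : ‖X‖ < 2 * Real.pi) {x : V} : NormedSpace.exp X x = x ↔ X x = 0 := by
  obtain ⟨g, hg⟩ := isUnit_cfc_dslope_exp hX
  have h := congr($(exp_sub_one_eq_cfc_dslope_exp_mul X) x)
  rw [sub_apply, one_apply_eq_self, ← hg, mul_apply_eq_comp] at h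
  rw [← sub_eq_zero, h]
  exact (ContinuousLinearEquiv.unitsEquiv ℂ V g).map_eq_zero_iff

lemma IsSelfAdjoint.eqLocus_exp_ofReal_mul_I_smul {A : V →L[ℂ] V} (hA : IsSelfAdjoint A)
    {r : ℝ} (hr : r ≠ 0) (hrA : |r| * ‖A‖ < 2 * Real.pi) :
    (NormedSpace.exp (((r : ℂ) * I) • A)).eqLocus (1 : V →L[ℂ] V) =
      LinearMap.ker (A : V →ₗ[ℂ] V) := by
  have := skewAdjoint.isStarNormal_of_mem (hA.ofReal_mul_I_smul_mem_skewAdjoint r)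
  ext x
  simp only [LinearMap.mem_eqLocus, ContinuousLinearMap.coe_coe, one_apply_eq_self,
    LinearMap.mem_ker]
  rw [ContinuousLinearMap.exp_apply_eq_self_iff (by simpa [norm_smul] using hrA), smul_apply,
    smul_eq_zero]
  simp [hr]

lemma IsSelfAdjoint.norm_exp_ofReal_mul_I_smul_apply {A : V →L[ℂ] V} (hA : IsSelfAdjoint A)
    (r : ℝ) (x : V) : ‖NormedSpace.exp (((r : ℂ) * I) • A) x‖ = ‖x‖ :=
  ContinuousLinearMap.norm_map_of_mem_unitary (hA.exp_ofReal_mul_I_smul_mem_unitary r) x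

lemma IsSelfAdjoint.norm_exp_ofReal_mul_I_smul_le_one {A : V →L[ℂ] V} (hA : IsSelfAdjoint A)
    (r : ℝ) : ‖NormedSpace.exp (((r : ℂ) * I) • A)‖ ≤ 1 :=
  ContinuousLinearMap.opNorm_le_bound _ zero_le_one fun x => by
    rw [hA.norm_exp_ofReal_mul_I_smul_apply, one_mul]

lemma IsSelfAdjoint.bddAbove_norm_inner_exp {H : V →L[ℂ] V} (hH : IsSelfAdjoint H) (u v : V) :
    BddAbove (Set.range fun t : ℝ => ‖⟪u, NormedSpace.exp ((-(t : ℂ) * I) • H) v⟫_ℂ‖) := by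
  refine ⟨‖u‖ * ‖v‖, Set.forall_mem_range.2 fun t => (norm_inner_le_norm _ _).trans_eq ?_⟩
  rw [← Complex.ofReal_neg, hH.norm_exp_ofReal_mul_I_smul_apply]

lemma norm_inner_exp_smul_smul_one_sub_pow (H : V →L[ℂ] V) (E r : ℝ) (k : ℕ) (u v : V) :
    ‖⟪u, (NormedSpace.exp (((r : ℂ) * I) • ((E : ℂ) • 1 - H)) ^ k) v⟫_ℂ‖ =
      ‖⟪u, NormedSpace.exp ((-((k * r : ℝ) : ℂ) * I) • H) v⟫_ℂ‖ := by
  have hphase : (k : ℂ) * (r * I) * E = ((k * r * E : ℝ) : ℂ) * I := by push_cast; ring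
  have htime : -((k : ℂ) * (r * I)) = -((k * r : ℝ) : ℂ) * I := by push_cast; ring
  rw [exp_smul_smul_one_sub_pow, smul_apply, inner_smul_right, norm_mul, hphase,
    Complex.norm_exp_ofReal_mul_I, one_mul, htime]

end Hilbert

/-- For a bounded self-adjoint operator `H` with a simple eigenvalue `E` and normalized
eigenfunction `φ`, and any vectors `u, v`:
`|⟨u, φ⟩⟨φ, v⟩| ≤ sup_t |⟨u, e^{-itH} v⟩|`. -/
theorem eigenprojection_le_sup_evolution
    {H' : Type*} [NormedAddCommGroup H'] [InnerProductSpace ℂ H'] [CompleteSpace H']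
    (H : H' →L[ℂ] H') (hH : IsSelfAdjoint H)
    (E : ℝ) (φ : H') (hφnorm : ‖φ‖ = 1)
    (hφeig : H φ = (E : ℂ) • φ)
    (hsimple : ∀ ψ : H', H ψ = (E : ℂ) • ψ → ∃ a : ℂ, ψ = a • φ)
    (u v : H') :
    ‖⟪u, φ⟫_ℂ * ⟪φ, v⟫_ℂ‖ ≤
      ⨆ t : ℝ, ‖⟪u, (NormedSpace.exp ((-(t : ℂ) * Complex.I) • H)) v⟫_ℂ‖ := by
  set A : H' →L[ℂ] H' := (E : ℂ) • 1 - H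
  have hA : IsSelfAdjoint A := (IsSelfAdjoint.smul (by simp [IsSelfAdjoint]) (.one _)).sub hH
  have hker : LinearMap.ker (A : H' →ₗ[ℂ] H') = ℂ ∙ φ := by
    ext ψ
    have hAψ : A ψ = 0 ↔ H ψ = (E : ℂ) • ψ := by
      simp only [A, sub_apply, smul_apply, one_apply_eq_self]
      exact sub_eq_zero.trans eq_comm
    rw [LinearMap.mem_ker, ContinuousLinearMap.coe_coe, hAψ, Submodule.mem_span_singleton]
    refine ⟨fun h => (hsimple ψ h).imp fun a ha => ha.symm, ?_⟩
    rintro ⟨a, rfl⟩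
    rw [map_smul, hφeig, smul_comm]
  set s : ℝ := (‖A‖ + 1)⁻¹
  have hs : 0 < s := by positivity
  have hsA : |s| * ‖A‖ < 2 * Real.pi := by
    rw [abs_of_pos hs, inv_mul_lt_iff₀ (by positivity)]
    nlinarith [Real.pi_gt_three, norm_nonneg A]
  have hpow (k : ℕ) := (norm_inner_exp_smul_smul_one_sub_pow H E s k u v).trans_le
    (le_ciSup (hH.bddAbove_norm_inner_exp u v) (k * s))
  have hmean := ContinuousLinearMap.norm_inner_starProjection_eqLocus_one_le _
    (hA.norm_exp_ofReal_mul_I_smul_le_one s) hpow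
  simp only [hA.eqLocus_exp_ofReal_mul_I_smul hs.ne' hsA, hker] at hmean
  rwa [Submodule.starProjection_unit_singleton ℂ hφnorm, inner_smul_right, mul_comm] at hmean
end

section
/- (Krein formula) Let H₀ be a bounded self-adjoint operator on a Hilbert space, P a finite-dimensional orthogonal projection, and W a self-adjoint operator with W = PWP. Set H = H₀ + W. Then for z with Im z ≠ 0, if the restriction of P(H₀ - z)^{-1}P to the range of P is invertible there, then P(H - z)^{-1}P restricted to the range of P equals (W + [P(H₀-z)^{-1}P]^{-1})^{-1}, all inverses taken on the range of P. -/
private lemma sa_unit {E : Type*} [NormedAddCommGroup E] [InnerProductSpace ℂ E]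
    [CompleteSpace E] (A : E →L[ℂ] E) (hA : IsSelfAdjoint A) (z : ℂ) (hz : z.im ≠ 0) :
    IsUnit (A - algebraMap ℂ (E →L[ℂ] E) z) := by
  have hmem : z ∉ spectrum ℂ A := fun h => hz (hA.im_eq_zero_of_mem_spectrum h)
  rw [spectrum.notMem_iff] at hmem
  simpa using hmem.neg

private lemma krein_alg {A : Type*} [Ring A] (P W B r0 r : A)
    (hPW : P * W = W) (hWP : W * P = W)
    (hres1 : r0 * W * r = r0 - r) (hres2 : r * W * r0 = r0 - r)
    (hB1 : B * (P * r0 * P) = P) (hB2 : (P * r0 * P) * B = P) :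
    (P * r * P) * (W + B) = P ∧ (W + B) * (P * r * P) = P := by
  have hW' : P * W * P = W := by rw [hPW, hWP]
  have key1 : P * r * P = P * r0 * P - (P * r0 * P) * W * (P * r * P) := by
    have h : P * (r0 * W * r) * P = (P * r0 * P) * W * (P * r * P) := by
      conv_lhs => rw [← hW']
      noncomm_ring
    rw [← h, hres1]; noncomm_ring
  have key2 : P * r * P = P * r0 * P - (P * r * P) * W * (P * r0 * P) := by
    have h : P * (r * W * r0) * P = (P * r * P) * W * (P * r0 * P) := by
      conv_lhs => rw [← hW']
      noncomm_ring
    rw [← h, hres2]; noncomm_ring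
  constructor
  · have h1 : (P * r * P) * B = P - (P * r * P) * W := by
      calc (P * r * P) * B
          = (P * r0 * P) * B - (P * r * P) * W * ((P * r0 * P) * B) := by
            conv_lhs => rw [key2]
            noncomm_ring
        _ = P - (P * r * P) * W * P := by rw [hB2]
        _ = P - (P * r * P) * W := by rw [mul_assoc (P * r * P) W P, hWP]
    rw [mul_add, h1]; noncomm_ring
  · have h1 : B * (P * r * P) = P - W * (P * r * P) := by
      calc B * (P * r * P)
          = B * (P * r0 * P) - (B * (P * r0 * P)) * (W * (P * r * P)) := by
            conv_lhs => rw [key1]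
            noncomm_ring
        _ = P - P * (W * (P * r * P)) := by rw [hB1]
        _ = P - W * (P * r * P) := by rw [← mul_assoc P W, hPW]
    rw [add_mul, h1]; noncomm_ring

/-- Krein formula: for `H = H₀ + W` with `W = PWP` a finite-rank self-adjoint perturbation
supported in the range of the finite-dimensional orthogonal projection `P`, and `Im z ≠ 0`,
if `B` is the inverse of `P(H₀ - z)⁻¹P` on the range of `P`, then `W + B` is the inverse of
`P(H - z)⁻¹P` on the range of `P`; i.e. `P(H - z)⁻¹P = (W + [P(H₀ - z)⁻¹P]⁻¹)⁻¹` there. -/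
theorem krein_formula
    {E : Type*} [NormedAddCommGroup E] [InnerProductSpace ℂ E] [CompleteSpace E]
    (H₀ W P : E →L[ℂ] E)
    (hH₀ : IsSelfAdjoint H₀) (hW : IsSelfAdjoint W)
    (hPproj : IsIdempotentElem P) (hPsa : IsSelfAdjoint P)
    (hPfin : FiniteDimensional ℂ (LinearMap.range (P : E →ₗ[ℂ] E)))
    (hWP : W = P * W * P)
    (z : ℂ) (hz : z.im ≠ 0)
    (B : E →L[ℂ] E) (hB : P * B * P = B)
    (hBinv₁ : B * (P * Ring.inverse (H₀ - algebraMap ℂ (E →L[ℂ] E) z) * P) = P)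
    (hBinv₂ : (P * Ring.inverse (H₀ - algebraMap ℂ (E →L[ℂ] E) z) * P) * B = P) :
    (P * Ring.inverse (H₀ + W - algebraMap ℂ (E →L[ℂ] E) z) * P) * (W + B) = P ∧
    (W + B) * (P * Ring.inverse (H₀ + W - algebraMap ℂ (E →L[ℂ] E) z) * P) = P := by
  set a : E →L[ℂ] E := H₀ - algebraMap ℂ (E →L[ℂ] E) z with ha
  set b : E →L[ℂ] E := H₀ + W - algebraMap ℂ (E →L[ℂ] E) z with hb
  have hua : IsUnit a := sa_unit H₀ hH₀ z hz
  have hub : IsUnit b := sa_unit (H₀ + W) (hH₀.add hW) z hz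
  set r0 : E →L[ℂ] E := Ring.inverse a with hr0
  set r : E →L[ℂ] E := Ring.inverse b with hr
  have har : a * r0 = 1 := Ring.mul_inverse_cancel a hua
  have hra : r0 * a = 1 := Ring.inverse_mul_cancel a hua
  have hbr : b * r = 1 := Ring.mul_inverse_cancel b hub
  have hrb : r * b = 1 := Ring.inverse_mul_cancel b hub
  have hba : b - a = W := by rw [hb, ha]; abel
  have hres1 : r0 * W * r = r0 - r := by
    have h : r0 * (b - a) * r = r0 * b * r - r0 * a * r := by noncomm_ring
    rw [hba] at h
    rw [h, mul_assoc r0 b r, hbr, mul_one, hra, one_mul]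
  have hres2 : r * W * r0 = r0 - r := by
    have h : r * (b - a) * r0 = r * b * r0 - r * a * r0 := by noncomm_ring
    rw [hba] at h
    rw [h, hrb, one_mul, mul_assoc r a r0, har, mul_one]
  have hPW : P * W = W := by
    conv_lhs => rw [hWP, ← mul_assoc, ← mul_assoc, hPproj.eq]
    exact hWP.symm
  have hWPe : W * P = W := by
    conv_lhs => rw [hWP, mul_assoc, mul_assoc, hPproj.eq, ← mul_assoc]
    exact hWP.symm
  exact krein_alg P W B r0 r hPW hWPe hres1 hres2 hBinv₁ hBinv₂
end
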